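/- arXiv:1305.0057 — 2 statements merged into one kernel-verified Lean document; each statement's English description precedes it below -/
import Mathlib

section
/- Let Φ be a reduced root system with base Π, J ⊆ Π, and π: ZΦ → ZΦ/⟨Π∖J⟩ the projection. Let Φ° be an irreducible component of Φ and α a nonzero element of π(Φ). If iα and jα both lie in π(Φ)∖{0} for positive integers i, j with i ≠ j, then the difference of the Π-maximal roots of π⁻¹(iα)∩Φ° and π⁻¹(jα)∩Φ° is again a root of Φ. -/
open scoped RealInnerProductSpace

/-- A reduced root system `Φ` with a fixed base (system of simple roots) `base`
in a real inner product space. -/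
structure RootSystemData (V : Type) [NormedAddCommGroup V] [InnerProductSpace ℝ V] where
  Φ : Set V
  base : Finset V
  finite : Φ.Finite
  zero_notMem : (0:V) ∉ Φ
  neg_mem : ∀ a ∈ Φ, -a ∈ Φ
  reduced : ∀ a ∈ Φ, ∀ t : ℝ, t • a ∈ Φ → t = 1 ∨ t = -1
  reflect_mem : ∀ a ∈ Φ, ∀ b ∈ Φ, b - (2 * (inner ℝ a b : ℝ) / (inner ℝ a a : ℝ)) • a ∈ Φ
  cartan_int : ∀ a ∈ Φ, ∀ b ∈ Φ, ∃ n : ℤ, 2 * (inner ℝ a b : ℝ) / (inner ℝ a a : ℝ) = (n : ℝ)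
  base_sub : ↑base ⊆ Φ
  base_indep : LinearIndependent ℝ (fun b : base => (b : V))
  base_gen : ∀ a ∈ Φ,
    (∃ c : V → ℕ, a = ∑ b ∈ base, c b • b) ∨ (∃ c : V → ℕ, -a = ∑ b ∈ base, c b • b)

namespace RootSystemData

variable {V : Type} [NormedAddCommGroup V] [InnerProductSpace ℝ V] (RS : RootSystemData V)

/-- `a` is a nonnegative integral combination of the simple roots. -/
def IsPos (a : V) : Prop := ∃ c : V → ℕ, a = ∑ b ∈ RS.base, c b • b

/-- The quotient space `V / ⟨Π ∖ J⟩`, ambient space of the relative roots. -/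
abbrev Qspace (J : Finset V) : Type :=
  V ⧸ Submodule.span ℝ ((RS.base : Set V) \ (J : Set V))

/-- The canonical projection `π : V → V / ⟨Π ∖ J⟩`. -/
def proj (J : Finset V) : V →ₗ[ℝ] RS.Qspace J :=
  Submodule.mkQ _

/-- The set of relative roots `Φ_J = π(Φ) ∖ {0}`. -/
def relRoots (J : Finset V) : Set (RS.Qspace J) := (RS.proj J '' RS.Φ) \ {0}

/-- `β` is a simple relative root: a nonzero image of a simple root in `J`. -/
def IsSimpleRel (J : Finset V) (β : RS.Qspace J) : Prop :=
  β ≠ 0 ∧ ∃ b ∈ J, β = RS.proj J b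

/-- `β` is a positive relative root: a relative root that is a nonnegative
integral combination of the simple relative roots. -/
def IsPosRel (J : Finset V) (β : RS.Qspace J) : Prop :=
  β ∈ RS.relRoots J ∧ ∃ c : V → ℕ, β = ∑ b ∈ J, c b • RS.proj J b

/-- `a` is maximal in `S` with respect to the base `Π`. -/
def IsMaximalIn (S : Set V) (a : V) : Prop := a ∈ S ∧ ∀ b ∈ RS.base, a + b ∉ S

/-- `a` is minimal in `S` with respect to the base `Π`. -/
def IsMinimalIn (S : Set V) (a : V) : Prop := a ∈ S ∧ ∀ b ∈ RS.base, a - b ∉ S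

/-- `a` is the highest root: every root is obtained from it by subtracting a
nonnegative combination of simple roots. -/
def IsHighest (a : V) : Prop :=
  a ∈ RS.Φ ∧ ∀ b ∈ RS.Φ, ∃ c : V → ℕ, a - b = ∑ x ∈ RS.base, c x • x

/-- `S` is an irreducible component of `Φ`: a nonempty subset orthogonal to its
complement admitting no further nontrivial orthogonal splitting. -/
def IsComponent (S : Set V) : Prop :=
  S ⊆ RS.Φ ∧ S.Nonempty ∧ (∀ a ∈ S, ∀ b ∈ RS.Φ \ S, (inner ℝ a b : ℝ) = 0) ∧
    ∀ T ⊆ S, T.Nonempty → (∀ a ∈ T, ∀ b ∈ RS.Φ \ T, (inner ℝ a b : ℝ) = 0) → T = S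

/-- The root system is irreducible. -/
def Irred : Prop := RS.IsComponent RS.Φ

end RootSystemData

/-!
Maximality of `mᵢ` in its fibre forces `⟪mᵢ, k⟫ ≥ 0` for every simple root `k ∉ J`, since otherwise
`mᵢ + k` would be a root of `Φ°` with the same image `iα`. Write `T` for the span of `Π ∖ J`, on which
the simple roots are pairwise obtuse, and `mᵢ = u + p` with `u ∈ T`, `p ⊥ T`. A vector of `T` with
nonnegative inner products against `Π ∖ J` is a nonnegative combination of `Π ∖ J`, so `⟪u, mⱼ⟫ ≥ 0`;
and `i mⱼ - j mᵢ ∈ T` gives `i ⟪p, mⱼ⟫ = j ‖p‖² > 0`. Hence `⟪mᵢ, mⱼ⟫ > 0`, and two distinct roots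
with positive inner product differ by a root.
-/

section ObtuseCone

variable {V : Type*} [NormedAddCommGroup V] [InnerProductSpace ℝ V]

theorem exists_nonneg_coeffs_of_mem_span_of_inner_nonneg {K : Finset V}
    (hK : (K : Set V).Pairwise fun k k' => ⟪k, k'⟫ ≤ 0) {x : V}
    (hx : x ∈ Submodule.span ℝ (K : Set V)) (hxK : ∀ k ∈ K, 0 ≤ ⟪x, k⟫) :
    ∃ c : V → ℝ, (∀ k, 0 ≤ c k) ∧ x = ∑ k ∈ K, c k • k := by
  obtain ⟨f, -, rfl⟩ := Submodule.mem_span_finset.mp hx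
  set P := ∑ k ∈ K, (f k)⁺ • k
  set N := ∑ k ∈ K, (f k)⁻ • k
  have hPN : ∑ k ∈ K, f k • k = P - N := by
    simp only [P, N, ← Finset.sum_sub_distrib, ← sub_smul, posPart_sub_negPart]
  have hPN_nonpos : ⟪P, N⟫ ≤ 0 := by
    simp only [P, N, sum_inner, inner_sum, real_inner_smul_left, real_inner_smul_right]
    refine Finset.sum_nonpos fun k hk => Finset.sum_nonpos fun k' hk' => ?_
    obtain rfl | hne := eq_or_ne k k'
    · have hzero : (f k)⁺ * (f k)⁻ = 0 := by
        rcases le_total (f k) 0 with h | h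
        · rw [posPart_eq_zero.mpr h, zero_mul]
        · rw [negPart_eq_zero.mpr h, mul_zero]
      nlinarith [real_inner_self_nonneg (x := k)]
    · exact mul_nonpos_of_nonneg_of_nonpos (negPart_nonneg _)
        (mul_nonpos_of_nonneg_of_nonpos (posPart_nonneg _) (hK hk' hk hne.symm))
  have hxN : 0 ≤ ⟪P - N, N⟫ := by
    rw [← hPN]
    simp only [N, inner_sum, real_inner_smul_right]
    exact Finset.sum_nonneg fun k hk => mul_nonneg (negPart_nonneg _) (hxK k hk)
  have hN : N = 0 := by
    rw [inner_sub_left] at hxN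
    exact (inner_self_eq_zero (𝕜 := ℝ)).mp (le_antisymm (by linarith) real_inner_self_nonneg)
  exact ⟨fun k => (f k)⁺, fun k => posPart_nonneg _, by rw [hPN, hN, sub_zero]⟩

theorem inner_nonneg_of_mem_span_of_inner_nonneg {K : Finset V}
    (hK : (K : Set V).Pairwise fun k k' => ⟪k, k'⟫ ≤ 0) {x w : V}
    (hx : x ∈ Submodule.span ℝ (K : Set V)) (hxK : ∀ k ∈ K, 0 ≤ ⟪x, k⟫)
    (hwK : ∀ k ∈ K, 0 ≤ ⟪w, k⟫) : 0 ≤ ⟪x, w⟫ := by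
  obtain ⟨c, hc, rfl⟩ := exists_nonneg_coeffs_of_mem_span_of_inner_nonneg hK hx hxK
  rw [sum_inner]
  refine Finset.sum_nonneg fun k hk => ?_
  rw [real_inner_smul_left, real_inner_comm]
  exact mul_nonneg (hc k) (hwK k hk)

theorem inner_pos_of_smul_sub_smul_mem_span {K : Finset V}
    (hK : (K : Set V).Pairwise fun k k' => ⟪k, k'⟫ ≤ 0) {x y : V}
    (hxK : ∀ k ∈ K, 0 ≤ ⟪x, k⟫) (hyK : ∀ k ∈ K, 0 ≤ ⟪y, k⟫)
    (hx : x ∉ Submodule.span ℝ (K : Set V)) {a b : ℝ} (ha : 0 < a) (hb : 0 < b)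
    (hxy : a • y - b • x ∈ Submodule.span ℝ (K : Set V)) : 0 < ⟪x, y⟫ := by
  obtain ⟨u, hu, p, hp, rfl⟩ := (Submodule.span ℝ (K : Set V)).exists_add_mem_mem_orthogonal x
  have hp0 : p ≠ 0 := by
    rintro rfl
    exact hx (by simpa using hu)
  have hpK : ∀ k ∈ K, ⟪k, p⟫ = 0 := fun k hk => hp k (Submodule.subset_span hk)
  have huy : 0 ≤ ⟪u, y⟫ := by
    refine inner_nonneg_of_mem_span_of_inner_nonneg hK hu (fun k hk => ?_) hyK
    simpa [inner_add_left, real_inner_comm k p, hpK k hk] using hxK k hk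
  have hpy : a * ⟪p, y⟫ = b * ⟪p, p⟫ := by
    have h := hp _ hxy
    simp only [inner_sub_left, inner_add_left, real_inner_smul_left, hp u hu] at h
    rw [real_inner_comm]
    linarith
  have hpy_pos : 0 < ⟪p, y⟫ := by
    have := mul_pos hb (real_inner_self_pos.mpr hp0)
    rw [← hpy] at this
    exact pos_of_mul_pos_right this ha.le
  rw [inner_add_left]
  linarith

end ObtuseCone

namespace RootSystemData

variable {V : Type} [NormedAddCommGroup V] [InnerProductSpace ℝ V] (RS : RootSystemData V)

theorem ne_zero_of_mem {x : V} (hx : x ∈ RS.Φ) : x ≠ 0 :=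
  fun h => RS.zero_notMem (h ▸ hx)

theorem inner_lt_norm_mul_norm {x y : V} (hx : x ∈ RS.Φ) (hy : y ∈ RS.Φ) (hne : x ≠ y) :
    ⟪x, y⟫ < ‖x‖ * ‖y‖ := by
  refine inner_lt_norm_mul_iff_real.mpr fun h => hne ?_
  have hx0 : ‖x‖ ≠ 0 := norm_ne_zero_iff.mpr (RS.ne_zero_of_mem hx)
  have hyx : y = (‖y‖ / ‖x‖) • x := by
    rw [div_eq_inv_mul, mul_smul, h, inv_smul_smul₀ hx0]
  rcases RS.reduced x hx _ (hyx ▸ hy) with h1 | h1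
  · rw [hyx, h1, one_smul]
  · have : 0 ≤ ‖y‖ / ‖x‖ := by positivity
    linarith

theorem sub_mem_of_inner_pos {x y : V} (hx : x ∈ RS.Φ) (hy : y ∈ RS.Φ) (hne : x ≠ y)
    (hpos : 0 < ⟪x, y⟫) : x - y ∈ RS.Φ := by
  obtain ⟨n, hn⟩ := RS.cartan_int y hy x hx
  obtain ⟨m, hm⟩ := RS.cartan_int x hx y hy
  have hx0 := RS.ne_zero_of_mem hx
  have hy0 := RS.ne_zero_of_mem hy
  have hn' : (n : ℝ) = 2 * ⟪x, y⟫ / ‖y‖ ^ 2 := by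
    rw [← hn, real_inner_comm, real_inner_self_eq_norm_sq]
  have hm' : (m : ℝ) = 2 * ⟪x, y⟫ / ‖x‖ ^ 2 := by
    rw [← hm, real_inner_self_eq_norm_sq]
  have hn0 : 0 < n := by
    have : (0 : ℝ) < n := by rw [hn']; positivity
    exact_mod_cast this
  have hm0 : 0 < m := by
    have : (0 : ℝ) < m := by rw [hm']; positivity
    exact_mod_cast this
  -- strict Cauchy–Schwarz bounds the product of the two Cartan integers
  have hnm : n * m < 4 := by
    have hCS := RS.inner_lt_norm_mul_norm hx hy hne
    have : (n : ℝ) * m < 4 := by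
      rw [hn', hm', div_mul_div_comm, div_lt_iff₀ (by positivity)]
      nlinarith [mul_pos (norm_pos_iff.mpr hx0) (norm_pos_iff.mpr hy0)]
    exact_mod_cast this
  have hone : n = 1 ∨ m = 1 := by
    by_contra! h
    nlinarith [show 2 ≤ n by omega, show 2 ≤ m by omega]
  rcases hone with rfl | rfl
  · have h := RS.reflect_mem y hy x hx
    rwa [hn, Int.cast_one, one_smul] at h
  · have h := RS.neg_mem _ (RS.reflect_mem x hx y hy)
    rwa [hm, Int.cast_one, one_smul, neg_sub] at h

theorem add_mem_of_inner_neg {x y : V} (hx : x ∈ RS.Φ) (hy : y ∈ RS.Φ) (hne : x ≠ -y)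
    (hneg : ⟪x, y⟫ < 0) : x + y ∈ RS.Φ := by
  simpa using RS.sub_mem_of_inner_pos hx (RS.neg_mem y hy) hne (by simpa using hneg)

theorem not_isPos_sub {b b' : V} (hb : b ∈ RS.base) (hb' : b' ∈ RS.base) (hne : b ≠ b') :
    ¬RS.IsPos (b - b') := by
  classical
  rintro ⟨c, hc⟩
  -- `∑ c s • s + b' = b`; comparing coefficients of `b'` gives `c b' + 1 = 0`
  have hsum : ∑ s ∈ RS.base, ((c s : ℝ) + if s = b' then 1 else 0) • s
      = ∑ s ∈ RS.base, (if s = b then (1 : ℝ) else 0) • s := by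
    simp only [add_smul, ite_smul, one_smul, zero_smul, Finset.sum_add_distrib,
      Finset.sum_ite_eq', hb, hb', if_true, Nat.cast_smul_eq_nsmul, ← hc]
    abel
  have hind : LinearIndepOn ℝ id (RS.base : Set V) := RS.base_indep
  have h := linearIndepOn_finset_iffₛ.mp hind _ _ hsum b' hb'
  simp only [if_neg hne.symm, if_pos] at h
  exact absurd h (by positivity)

theorem inner_le_zero_of_mem_base {b b' : V} (hb : b ∈ RS.base) (hb' : b' ∈ RS.base)
    (hne : b ≠ b') : ⟪b, b'⟫ ≤ 0 := by
  by_contra! h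
  rcases RS.base_gen _ (RS.sub_mem_of_inner_pos (RS.base_sub hb) (RS.base_sub hb') hne h)
    with hpos | hneg
  · exact RS.not_isPos_sub hb hb' hne hpos
  · rw [neg_sub] at hneg
    exact RS.not_isPos_sub hb' hb hne.symm hneg

theorem proj_eq_zero_iff {J : Finset V} {v : V} :
    RS.proj J v = 0 ↔ v ∈ Submodule.span ℝ ((RS.base : Set V) \ J) :=
  Submodule.Quotient.mk_eq_zero _

variable {RS}

theorem IsComponent.add_mem {S : Set V} (hS : RS.IsComponent S) {a c : V} (ha : a ∈ S)
    (hc : c ∈ RS.Φ) (hac : a + c ∈ RS.Φ) : a + c ∈ S := by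
  by_contra h
  have h1 : ⟪a, a + c⟫ = 0 := hS.2.2.1 a ha _ ⟨hac, h⟩
  by_cases hcS : c ∈ S
  · have h2 : ⟪c, a + c⟫ = 0 := hS.2.2.1 c hcS _ ⟨hac, h⟩
    exact RS.ne_zero_of_mem hac
      ((inner_self_eq_zero (𝕜 := ℝ)).mp (by rw [inner_add_left, h1, h2, add_zero]))
  · have h2 : ⟪a, c⟫ = 0 := hS.2.2.1 a ha c ⟨hc, hcS⟩
    rw [inner_add_right, h2, add_zero] at h1
    exact RS.ne_zero_of_mem (hS.1 ha) ((inner_self_eq_zero (𝕜 := ℝ)).mp h1)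

theorem IsMaximalIn.inner_nonneg_of_notMem {J : Finset V} {S : Set V}
    (hS : RS.IsComponent S)
    {β : RS.Qspace J} (hβ : β ≠ 0) {m : V} (hm : RS.IsMaximalIn (S ∩ RS.proj J ⁻¹' {β}) m)
    {k : V} (hk : k ∈ RS.base) (hkJ : k ∉ J) : 0 ≤ ⟪m, k⟫ := by
  obtain ⟨⟨hmS, hmβ⟩, hmax⟩ := hm
  have hk0 : RS.proj J k = 0 := RS.proj_eq_zero_iff.mpr (Submodule.subset_span ⟨hk, hkJ⟩)
  by_contra! hneg
  have hmk : m ≠ -k := by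
    rintro rfl
    exact hβ (by simpa [hk0] using hmβ.symm)
  have hsum := RS.add_mem_of_inner_neg (hS.1 hmS) (RS.base_sub hk) hmk hneg
  exact hmax k hk ⟨hS.add_mem hmS (RS.base_sub hk) hsum, by simpa [hk0] using hmβ⟩

end RootSystemData

open RootSystemData in
theorem stmt1_general {V : Type} [NormedAddCommGroup V] [InnerProductSpace ℝ V]
    (RS : RootSystemData V) (J : Finset V)
    (S : Set V) (hS : RS.IsComponent S)
    (α : RS.Qspace J)
    (i j : ℕ) (hi : 0 < i) (hj : 0 < j) (hij : i ≠ j)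
    (hiα : (i : ℤ) • α ∈ RS.relRoots J) (hjα : (j : ℤ) • α ∈ RS.relRoots J)
    (mi mj : V)
    (hmi : RS.IsMaximalIn (S ∩ RS.proj J ⁻¹' {(i : ℤ) • α}) mi)
    (hmj : RS.IsMaximalIn (S ∩ RS.proj J ⁻¹' {(j : ℤ) • α}) mj) :
    mj - mi ∈ RS.Φ := by
  classical
  have hiα0 : (i : ℤ) • α ≠ 0 := hiα.2
  have hpi : RS.proj J mi = (i : ℤ) • α := hmi.1.2
  have hpj : RS.proj J mj = (j : ℤ) • α := hmj.1.2
  have hne : mj ≠ mi := by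
    intro h
    have h' : ((i : ℤ) : ℝ) • α = ((j : ℤ) : ℝ) • α := by
      simp only [Int.cast_smul_eq_zsmul, ← hpi, ← hpj, h]
    exact hij (by exact_mod_cast smul_left_injective ℝ (right_ne_zero_of_smul hiα0) h')
  refine RS.sub_mem_of_inner_pos (hS.1 hmj.1.1) (hS.1 hmi.1.1) hne ?_
  rw [real_inner_comm]
  have hK : ((RS.base \ J : Finset V) : Set V) = (RS.base : Set V) \ J := Finset.coe_sdiff _ _
  refine inner_pos_of_smul_sub_smul_mem_span (K := RS.base \ J) (a := i) (b := j)
    (fun _ hk _ hk' => RS.inner_le_zero_of_mem_base (Finset.mem_sdiff.mp hk).1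
      (Finset.mem_sdiff.mp hk').1)
    (fun _ hk => hmi.inner_nonneg_of_notMem hS hiα0 (Finset.mem_sdiff.mp hk).1
      (Finset.mem_sdiff.mp hk).2)
    (fun _ hk => hmj.inner_nonneg_of_notMem hS hjα.2 (Finset.mem_sdiff.mp hk).1
      (Finset.mem_sdiff.mp hk).2)
    (fun h => hiα0 (hpi ▸ RS.proj_eq_zero_iff.mpr (hK ▸ h))) (by positivity) (by positivity)
    (hK ▸ RS.proj_eq_zero_iff.mp ?_)
  rw [map_sub, map_smul, map_smul, hpi, hpj]
  simp [Nat.cast_smul_eq_nsmul, smul_smul, mul_comm]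

open RootSystemData in
theorem stmt1 {V : Type} [NormedAddCommGroup V] [InnerProductSpace ℝ V]
    (RS : RootSystemData V) (J : Finset V) (hJ : J ⊆ RS.base)
    (S : Set V) (hS : RS.IsComponent S)
    (α : RS.Qspace J)
    (i j : ℕ) (hi : 0 < i) (hj : 0 < j) (hij : i ≠ j)
    (hiα : (i : ℤ) • α ∈ RS.relRoots J) (hjα : (j : ℤ) • α ∈ RS.relRoots J)
    (mi mj : V)
    (hmi : RS.IsMaximalIn (S ∩ RS.proj J ⁻¹' {(i : ℤ) • α}) mi)
    (hmj : RS.IsMaximalIn (S ∩ RS.proj J ⁻¹' {(j : ℤ) • α}) mj) :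
    mj - mi ∈ RS.Φ :=
  stmt1_general RS J S hS α i j hi hj hij hiα hjα mi mj hmi hmj
end

section
/- Let Φ be a reduced root system with base Π, J ⊆ Π, π: ZΦ → ZΦ/⟨Π∖J⟩, and let Φ_J = π(Φ)∖{0} be the set of relative roots. For any α ∈ Φ_J there is an integer m_α ≥ 1 such that Zα ∩ Φ_J = {±α, ±2α, …, ±m_α α}; that is, the set of integer multiples of α that are relative roots forms a symmetric interval of multiples without gaps. -/
open scoped RealInnerProductSpace

/-!
Fix `α ∈ Φ_J` and let `v` be the sum of all roots lying over `α`. The roots of `Φ` projecting to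
`α` are permuted by the reflections in the simple roots outside `J`, so `v` is orthogonal to
`⟨Π ∖ J⟩`, and `⟪v, ·⟫` factors through `π`. Hence if a root `b` lies over `kα` with `k ≥ 2`,
then `⟪v, b⟫ = k ⟪v, a⟫ > 0` for any root `a` over `α`, so some root `a` over `α` satisfies
`⟪a, b⟫ > 0` and `b - a` is a root over `(k - 1)α`. Descending from the largest multiple of `α`
in the finite set `Φ_J` gives the interval, and `Φ_J = -Φ_J` gives its symmetry.
-/

namespace RootSystemData

variable {V : Type} [NormedAddCommGroup V] [InnerProductSpace ℝ V] (RS : RootSystemData V)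

lemma ne_zero_of_mem_s2 {a : V} (ha : a ∈ RS.Φ) : a ≠ 0 :=
  fun h => RS.zero_notMem (h ▸ ha)

lemma sub_mem_of_inner_pos_s2 {a b : V} (ha : a ∈ RS.Φ) (hb : b ∈ RS.Φ) (hne : a ≠ b)
    (hpos : 0 < ⟪a, b⟫) : b - a ∈ RS.Φ := by
  have haa : 0 < ⟪a, a⟫ := real_inner_self_pos.mpr (RS.ne_zero_of_mem_s2 ha)
  have hbb : 0 < ⟪b, b⟫ := real_inner_self_pos.mpr (RS.ne_zero_of_mem_s2 hb)
  obtain ⟨n₁, hn₁⟩ := RS.cartan_int a ha b hb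
  obtain ⟨n₂, hn₂⟩ := RS.cartan_int b hb a ha
  rw [real_inner_comm] at hn₂
  have hn₁pos : 0 < n₁ := by exact_mod_cast (hn₁ ▸ by positivity : (0 : ℝ) < n₁)
  have hn₂pos : 0 < n₂ := by exact_mod_cast (hn₂ ▸ by positivity : (0 : ℝ) < n₂)
  by_cases h₁ : n₁ = 1
  · simpa only [hn₁, h₁, Int.cast_one, one_smul] using RS.reflect_mem a ha b hb
  by_cases h₂ : n₂ = 1
  · have h := RS.neg_mem _ (RS.reflect_mem b hb a ha)
    rwa [real_inner_comm, hn₂, h₂, Int.cast_one, one_smul, neg_sub] at h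
  exfalso
  -- Both Cartan integers are at least `2`, which forces `‖a - b‖² ≤ 0`.
  have hn₁2 : (2 : ℝ) ≤ n₁ := by exact_mod_cast (by omega : (2 : ℤ) ≤ n₁)
  have hn₂2 : (2 : ℝ) ≤ n₂ := by exact_mod_cast (by omega : (2 : ℤ) ≤ n₂)
  rw [← hn₁, le_div_iff₀ haa] at hn₁2
  rw [← hn₂, le_div_iff₀ hbb] at hn₂2
  have : ⟪a - b, a - b⟫ ≤ 0 := by rw [real_inner_sub_sub_self]; linarith
  exact hne (sub_eq_zero.mp (real_inner_self_nonpos.mp this))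

lemma neg_mem_relRoots (J : Finset V) {β : RS.Qspace J} (hβ : β ∈ RS.relRoots J) :
    -β ∈ RS.relRoots J := by
  obtain ⟨⟨b, hbΦ, rfl⟩, hβ0⟩ := hβ
  exact ⟨⟨-b, RS.neg_mem b hbΦ, map_neg _ b⟩, by simpa using hβ0⟩

lemma zsmul_mem_relRoots_iff_natAbs (J : Finset V) (β : RS.Qspace J) (k : ℤ) :
    k • β ∈ RS.relRoots J ↔ k.natAbs • β ∈ RS.relRoots J := by
  obtain ⟨n, rfl | rfl⟩ := Int.eq_nat_or_neg k
  · simp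
  · refine ⟨fun h => ?_, fun h => ?_⟩ <;>
      simpa [neg_smul] using RS.neg_mem_relRoots J h

lemma proj_eq_zero_of_mem_sdiff {J : Finset V} {c : V}
    (hc : c ∈ (RS.base : Set V) \ (J : Set V)) : RS.proj J c = 0 :=
  (Submodule.Quotient.mk_eq_zero _).mpr (Submodule.subset_span hc)

lemma finite_relRoots (J : Finset V) : (RS.relRoots J).Finite :=
  (RS.finite.image _).sdiff

instance (J : Finset V) : IsAddTorsionFree (RS.Qspace J) :=
  .of_isTorsionFree ℝ _

noncomputable def fiber (J : Finset V) (β : RS.Qspace J) : Finset V :=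
  (RS.finite.inter_of_left (RS.proj J ⁻¹' {β})).toFinset

variable {RS}

lemma mem_fiber {J : Finset V} {β : RS.Qspace J} {a : V} :
    a ∈ RS.fiber J β ↔ a ∈ RS.Φ ∧ RS.proj J a = β := by
  simp [fiber]

end RootSystemData

section Reflection

variable {V : Type} [NormedAddCommGroup V] [InnerProductSpace ℝ V]

lemma inner_sum_eq_zero_of_reflection_mem {S : Finset V} {c : V} (hc : c ≠ 0)
    (hS : ∀ x ∈ S, x - (2 * ⟪c, x⟫ / ⟪c, c⟫) • c ∈ S) : ⟪c, ∑ x ∈ S, x⟫ = 0 := by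
  set s : V → V := fun x => x - (2 * ⟪c, x⟫ / ⟪c, c⟫) • c
  have hcc : ⟪c, c⟫ ≠ 0 := (real_inner_self_pos.mpr hc).ne'
  have hinner : ∀ x, ⟪c, s x⟫ = -⟪c, x⟫ := by
    intro x
    simp only [s, inner_sub_right, real_inner_smul_right]
    field_simp
    ring
  have hs : ∀ x, s (s x) = x := by
    intro x
    change s x - (2 * ⟪c, s x⟫ / ⟪c, c⟫) • c = x
    rw [hinner]
    simp only [s, mul_neg, neg_div, neg_smul, sub_neg_eq_add, sub_add_cancel]
  have hsum : ∑ x ∈ S, ⟪c, x⟫ = ∑ x ∈ S, ⟪c, s x⟫ :=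
    Finset.sum_nbij' s s hS hS (fun x _ => hs x) (fun x _ => hs x) (fun x _ => by rw [hs])
  simp only [hinner, Finset.sum_neg_distrib] at hsum
  rw [inner_sum]
  linarith

end Reflection

namespace RootSystemData

variable {V : Type} [NormedAddCommGroup V] [InnerProductSpace ℝ V] {RS : RootSystemData V}
  {J : Finset V}

lemma inner_fiber_sum_eq_zero_of_mem_span {β : RS.Qspace J} {u : V}
    (hu : u ∈ Submodule.span ℝ ((RS.base : Set V) \ (J : Set V))) :
    ⟪u, ∑ a ∈ RS.fiber J β, a⟫ = 0 := by
  refine Submodule.mem_orthogonal_singleton_iff_inner_left.mp (Submodule.span_le.mpr ?_ hu)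
  intro c hc
  refine Submodule.mem_orthogonal_singleton_iff_inner_left.mpr <|
    inner_sum_eq_zero_of_reflection_mem (RS.ne_zero_of_mem_s2 (RS.base_sub hc.1)) fun x hx => ?_
  obtain ⟨hxΦ, hxβ⟩ := mem_fiber.mp hx
  refine mem_fiber.mpr ⟨RS.reflect_mem c (RS.base_sub hc.1) x hxΦ, ?_⟩
  rw [map_sub, map_smul, RS.proj_eq_zero_of_mem_sdiff hc, smul_zero, sub_zero, hxβ]

lemma inner_fiber_sum_eq_of_proj_eq {β : RS.Qspace J} {x y : V}
    (hxy : RS.proj J x = RS.proj J y) :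
    ⟪∑ a ∈ RS.fiber J β, a, x⟫ = ⟪∑ a ∈ RS.fiber J β, a, y⟫ := by
  have hmem : x - y ∈ Submodule.span ℝ ((RS.base : Set V) \ (J : Set V)) :=
    (Submodule.Quotient.eq _).mp hxy
  rw [← sub_eq_zero, ← inner_sub_right, real_inner_comm]
  exact inner_fiber_sum_eq_zero_of_mem_span hmem

lemma exists_mem_fiber_inner_pos {β : RS.Qspace J} (hβ : β ≠ 0) {a₀ : V}
    (ha₀ : a₀ ∈ RS.fiber J β) {b : V} {t : ℝ} (ht : 0 < t) (hb : RS.proj J b = t • β) :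
    ∃ a ∈ RS.fiber J β, 0 < ⟪a, b⟫ := by
  set v := ∑ a ∈ RS.fiber J β, a
  have hcard : 0 < (RS.fiber J β).card := Finset.card_pos.mpr ⟨a₀, ha₀⟩
  have hv_fiber : ∀ a ∈ RS.fiber J β, ⟪v, a⟫ = ⟪v, a₀⟫ := fun a ha =>
    inner_fiber_sum_eq_of_proj_eq ((mem_fiber.mp ha).2.trans (mem_fiber.mp ha₀).2.symm)
  have hv : v ≠ 0 := by
    have hproj : RS.proj J v = (RS.fiber J β).card • β := by
      rw [map_sum, Finset.sum_congr rfl fun a ha => (mem_fiber.mp ha).2, Finset.sum_const]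
    intro h
    rw [h, map_zero] at hproj
    exact smul_ne_zero hcard.ne' hβ hproj.symm
  have hvv : ⟪v, v⟫ = (RS.fiber J β).card * ⟪v, a₀⟫ := by
    conv_lhs => rw [inner_sum]
    rw [Finset.sum_congr rfl hv_fiber, Finset.sum_const, nsmul_eq_mul]
  have hva₀ : 0 < ⟪v, a₀⟫ :=
    pos_of_mul_pos_right (hvv ▸ real_inner_self_pos.mpr hv) (Nat.cast_nonneg _)
  have hvb : ⟪v, b⟫ = t * ⟪v, a₀⟫ := by
    rw [← real_inner_smul_right]
    refine inner_fiber_sum_eq_of_proj_eq ?_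
    rw [hb, map_smul, (mem_fiber.mp ha₀).2]
  by_contra! h
  have : ⟪v, b⟫ ≤ 0 := by
    rw [sum_inner]
    exact Finset.sum_nonpos h
  nlinarith

lemma nsmul_mem_relRoots_of_succ {α : RS.Qspace J} (hα : α ∈ RS.relRoots J) {n : ℕ}
    (hn : n ≠ 0) (h : (n + 1) • α ∈ RS.relRoots J) : n • α ∈ RS.relRoots J := by
  obtain ⟨⟨a₀, ha₀, ha₀α⟩, hα0⟩ := hα
  obtain ⟨⟨b, hb, hbα⟩, -⟩ := h
  have hα0 : α ≠ 0 := hα0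
  have hnα : n • α ≠ 0 := smul_ne_zero hn hα0
  obtain ⟨a, haS, hab⟩ := exists_mem_fiber_inner_pos hα0 (mem_fiber.mpr ⟨ha₀, ha₀α⟩)
    (by positivity : (0 : ℝ) < n + 1) (by rw [hbα, ← Nat.cast_smul_eq_nsmul ℝ]; push_cast; rfl)
  obtain ⟨ha, haα⟩ := mem_fiber.mp haS
  have hne : a ≠ b := by
    rintro rfl
    rw [haα, succ_nsmul] at hbα
    exact hnα (add_eq_right.mp hbα.symm)
  refine ⟨⟨b - a, RS.sub_mem_of_inner_pos_s2 ha hb hne hab, ?_⟩, hnα⟩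
  rw [map_sub, hbα, haα, succ_nsmul, add_sub_cancel_right]

lemma nsmul_mem_relRoots_of_le {α : RS.Qspace J} (hα : α ∈ RS.relRoots J) {m n : ℕ}
    (hn : n ≠ 0) (hnm : n ≤ m) (hm : m • α ∈ RS.relRoots J) : n • α ∈ RS.relRoots J := by
  induction m, hnm using Nat.le_induction with
  | base => exact hm
  | succ m hnm ih => exact ih (nsmul_mem_relRoots_of_succ hα (by omega) hm)

lemma exists_nsmul_mem_relRoots_iff {α : RS.Qspace J} (hα : α ∈ RS.relRoots J) :
    ∃ m : ℕ, 1 ≤ m ∧ ∀ n : ℕ, (n • α ∈ RS.relRoots J ↔ n ≠ 0 ∧ n ≤ m) := by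
  set T := {n : ℕ | n • α ∈ RS.relRoots J}
  have hinj : Function.Injective fun n : ℕ => n • α := by
    simpa only [Function.comp_def, Nat.cast_smul_eq_nsmul] using
      (smul_left_injective ℝ hα.2).comp Nat.cast_injective
  have hT : BddAbove T := ((RS.finite_relRoots J).preimage hinj.injOn).bddAbove
  have h1 : 1 ∈ T := by simpa [T] using hα
  refine ⟨sSup T, le_csSup hT h1, fun n => ⟨fun hn => ⟨?_, le_csSup hT hn⟩, fun ⟨hn, hnm⟩ =>
    nsmul_mem_relRoots_of_le hα hn hnm (Nat.sSup_mem ⟨1, h1⟩ hT)⟩⟩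
  rintro rfl
  exact hn.2 (zero_smul ℕ α)

end RootSystemData

open RootSystemData in
theorem stmt2_general {V : Type} [NormedAddCommGroup V] [InnerProductSpace ℝ V]
    (RS : RootSystemData V) (J : Finset V)
    (α : RS.Qspace J) (hα : α ∈ RS.relRoots J) :
    ∃ m : ℕ, 1 ≤ m ∧ ∀ k : ℤ, (k • α ∈ RS.relRoots J ↔ k ≠ 0 ∧ k.natAbs ≤ m) := by
  obtain ⟨m, hm, hiff⟩ := exists_nsmul_mem_relRoots_iff hα
  exact ⟨m, hm, fun k => by rw [RS.zsmul_mem_relRoots_iff_natAbs, hiff, Int.natAbs_ne_zero]⟩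

open RootSystemData in
theorem stmt2 {V : Type} [NormedAddCommGroup V] [InnerProductSpace ℝ V]
    (RS : RootSystemData V) (J : Finset V) (hJ : J ⊆ RS.base)
    (α : RS.Qspace J) (hα : α ∈ RS.relRoots J) :
    ∃ m : ℕ, 1 ≤ m ∧ ∀ k : ℤ, (k • α ∈ RS.relRoots J ↔ k ≠ 0 ∧ k.natAbs ≤ m) :=
  stmt2_general RS J α hα
end
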